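/- A family F of nonempty subsets of a finite set N is weakly union-closed (F ∩ G ≠ ∅ implies F ∪ G ∈ F for all F, G ∈ F) if and only if for every G ⊆ N the maximal elements of F(G) = {F ∈ F : F ⊆ G} are pairwise disjoint. -/

import Mathlib

open Finset

section

variable {N : Type*} [DecidableEq N]

def IsWeaklyUnionClosed (Fam : Finset (Finset N)) : Prop :=
  ∀ F ∈ Fam, ∀ G ∈ Fam, (F ∩ G).Nonempty → F ∪ G ∈ Fam

/-- The maximal elements of `F(G) = {F ∈ Fam | F ⊆ G}` are pairwise disjoint, for every `G`. -/
def HasDisjointMaximals (Fam : Finset (Finset N)) : Prop :=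
  ∀ G : Finset N, ∀ F1 ∈ Fam, ∀ F2 ∈ Fam,
    F1 ⊆ G → F2 ⊆ G →
    (∀ F' ∈ Fam, F' ⊆ G → F1 ⊆ F' → F1 = F') →
    (∀ F' ∈ Fam, F' ⊆ G → F2 ⊆ F' → F2 = F') →
    F1 ≠ F2 → F1 ∩ F2 = ∅

variable {Fam : Finset (Finset N)}

theorem exists_maximal_superset_of_subset {F G : Finset N} (hF : F ∈ Fam) (hFG : F ⊆ G) :
    ∃ M ∈ Fam, M ⊆ G ∧ F ⊆ M ∧ ∀ F' ∈ Fam, F' ⊆ G → M ⊆ F' → M = F' := by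
  obtain ⟨M, hFM, hM⟩ := (Fam.filter (· ⊆ G)).exists_le_maximal (mem_filter.2 ⟨hF, hFG⟩)
  obtain ⟨hMFam, hMG⟩ := mem_filter.1 hM.prop
  exact ⟨M, hMFam, hMG, hFM,
    fun F' hF' hF'G hMF' => hM.eq_of_le (mem_filter.2 ⟨hF', hF'G⟩) hMF'⟩

theorem IsWeaklyUnionClosed.hasDisjointMaximals (hFam : IsWeaklyUnionClosed Fam) :
    HasDisjointMaximals Fam := by
  intro G F1 h1 F2 h2 h1G h2G hmax1 hmax2 hne
  by_contra hinter
  have hU : F1 ∪ F2 ∈ Fam := hFam F1 h1 F2 h2 (nonempty_iff_ne_empty.2 hinter)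
  have hUG : F1 ∪ F2 ⊆ G := union_subset h1G h2G
  exact hne ((hmax1 _ hU hUG subset_union_left).trans
    (hmax2 _ hU hUG subset_union_right).symm)

/-- Inside `F ∪ G`, the maximal members above `F` and above `G` meet, hence coincide, and so
contain (hence equal) `F ∪ G`. -/
theorem HasDisjointMaximals.isWeaklyUnionClosed (hFam : HasDisjointMaximals Fam) :
    IsWeaklyUnionClosed Fam := by
  intro F hF G hG hFG
  obtain ⟨M1, hM1, hM1U, hFM1, hmax1⟩ :=
    exists_maximal_superset_of_subset (G := F ∪ G) hF subset_union_left
  obtain ⟨M2, hM2, hM2U, hGM2, hmax2⟩ :=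
    exists_maximal_superset_of_subset (G := F ∪ G) hG subset_union_right
  have hM12 : M1 = M2 := by
    by_contra hne
    have hinter : (M1 ∩ M2).Nonempty := hFG.mono (inter_subset_inter hFM1 hGM2)
    exact hinter.ne_empty (hFam _ M1 hM1 M2 hM2 hM1U hM2U hmax1 hmax2 hne)
  have hUM1 : F ∪ G = M1 := (union_subset hFM1 (hM12 ▸ hGM2)).antisymm hM1U
  exact hUM1 ▸ hM1

end

theorem stmt_9 {N : Type*} [DecidableEq N]
    (Fam : Finset (Finset N)) :
    (∀ F ∈ Fam, ∀ G ∈ Fam, (F ∩ G).Nonempty → F ∪ G ∈ Fam) ↔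
    (∀ G : Finset N, ∀ F1 ∈ Fam, ∀ F2 ∈ Fam,
        F1 ⊆ G → F2 ⊆ G →
        (∀ F' ∈ Fam, F' ⊆ G → F1 ⊆ F' → F1 = F') →
        (∀ F' ∈ Fam, F' ⊆ G → F2 ⊆ F' → F2 = F') →
        F1 ≠ F2 → F1 ∩ F2 = ∅) :=
  ⟨IsWeaklyUnionClosed.hasDisjointMaximals, HasDisjointMaximals.isWeaklyUnionClosed⟩
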